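/- arXiv:2311.17774 — 5 statements merged into one kernel-verified Lean document; each statement's English description precedes it below -/
import Mathlib

section
/- Let g_i, g_j be rows of the polar transform matrix G_N = [[1,0],[1,1]]^{⊗n} over F_2. Then the Hamming weight of g_i XOR g_j equals 2^{w(i)} + 2^{w(j)} - 2^{w(i AND j)+1}, where AND denotes bitwise AND of the binary expansions and w denotes Hamming weight of the binary expansion. -/
/-- Hamming weight of the binary expansion of a natural number. -/
def wt (i : ℕ) : ℕ := (Nat.digits 2 i).sum

/-- The 2×2 polar kernel [[1,0],[1,1]] over F₂. -/
def kernel : Matrix (Fin 2) (Fin 2) (ZMod 2) := !![1, 0; 1, 1]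

/-- The polar transform matrix `G_N = [[1,0],[1,1]]^{⊗ n}`, `N = 2^n`,
defined as the n-fold Kronecker power of the kernel. -/
def polarG : (n : ℕ) → Matrix (Fin (2 ^ n)) (Fin (2 ^ n)) (ZMod 2)
  | 0 => 1
  | n + 1 =>
    Matrix.reindex (finProdFinEquiv.trans (finCongr (by ring)))
      (finProdFinEquiv.trans (finCongr (by ring)))
      (Matrix.kroneckerMap (· * ·) kernel (polarG n))

/-- Hamming weight of a binary vector. -/
def rowWt {N : ℕ} (v : Fin N → ZMod 2) : ℕ :=
  (Finset.univ.filter fun j => v j ≠ 0).card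

lemma wt_step (m : ℕ) (h : 0 < m) : wt m = m % 2 + wt (m / 2) := by
  unfold wt
  rw [Nat.digits_def' (by norm_num : 1 < 2) h]
  simp

lemma wt_pow_add : ∀ {n i : ℕ}, i < 2 ^ n → wt (2 ^ n + i) = wt i + 1 := by
  intro n
  induction n with
  | zero => intro i hi; interval_cases i; simp [wt]
  | succ n ih =>
    intro i hi
    have h2 : (2:ℕ) ^ (n+1) = 2 * 2 ^ n := by ring
    have h1 : 0 < 2 ^ (n+1) + i := by positivity
    rw [wt_step _ h1]
    have hm : (2 ^ (n+1) + i) % 2 = i % 2 := by omega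
    have hd : (2 ^ (n+1) + i) / 2 = 2 ^ n + i / 2 := by omega
    rw [hm, hd, ih (by omega)]
    rcases Nat.eq_zero_or_pos i with h | h
    · subst h; simp [wt]
    · rw [wt_step i h]; ring

lemma wt_split {n : ℕ} (a b : ℕ) (ha : a < 2) (hb : b < 2 ^ n) :
    wt (2 ^ n * a + b) = wt a + wt b := by
  interval_cases a
  · simp [wt]
  · rw [mul_one, wt_pow_add hb]
    have : wt 1 = 1 := by simp [wt]
    omega

lemma land_split {n a1 b1 a2 b2 : ℕ} (ha : a2 < 2 ^ n) (hb : b2 < 2 ^ n) :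
    (2 ^ n * a1 + a2) &&& (2 ^ n * b1 + b2) = 2 ^ n * (a1 &&& b1) + (a2 &&& b2) := by
  have hab : a2 &&& b2 < 2 ^ n := lt_of_le_of_lt Nat.and_le_left ha
  apply Nat.eq_of_testBit_eq
  intro k
  rw [Nat.testBit_and, Nat.testBit_two_pow_mul_add _ ha, Nat.testBit_two_pow_mul_add _ hb,
    Nat.testBit_two_pow_mul_add _ hab]
  by_cases hk : k < n <;> simp [hk, Nat.testBit_and]

lemma add_decomp_inj {c a b a' b' : ℕ} (hc : 0 < c) (hb : b < c) (hb' : b' < c)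
    (h : c * a + b = c * a' + b') : a = a' ∧ b = b' := by
  have h1 : a = a' := by
    have := congrArg (· / c) h
    simpa [Nat.mul_add_div hc, Nat.div_eq_of_lt hb, Nat.div_eq_of_lt hb'] using this
  subst h1
  omega

lemma land_split_iff {n i1 i2 j1 j2 : ℕ} (hi : i2 < 2 ^ n) (hj : j2 < 2 ^ n) :
    (2 ^ n * j1 + j2) &&& (2 ^ n * i1 + i2) = 2 ^ n * j1 + j2 ↔
      (j1 &&& i1 = j1 ∧ j2 &&& i2 = j2) := by
  rw [land_split hj hi]
  constructor
  · intro h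
    exact add_decomp_inj (by positivity) (lt_of_le_of_lt Nat.and_le_left hj) hj h
  · rintro ⟨h1, h2⟩; rw [h1, h2]

lemma land_and_iff (k i j : ℕ) : (k &&& i = k ∧ k &&& j = k) ↔ k &&& (i &&& j) = k := by
  constructor
  · rintro ⟨h1, h2⟩
    rw [← Nat.and_assoc, h1, h2]
  · intro h
    constructor
    · conv_lhs => rw [← h]
      rw [Nat.and_assoc, Nat.and_assoc, Nat.and_comm j i, ← Nat.and_assoc i, Nat.and_self]
      exact h
    · conv_lhs => rw [← h]
      rw [Nat.and_assoc, Nat.and_assoc, Nat.and_self]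
      exact h

lemma kernel_apply (a b : Fin 2) :
    kernel a b = if (b : ℕ) &&& (a : ℕ) = (b : ℕ) then 1 else 0 := by
  fin_cases a <;> fin_cases b <;> simp [kernel]

lemma polarG_apply : ∀ (n : ℕ) (i j : Fin (2 ^ n)),
    polarG n i j = if (j : ℕ) &&& (i : ℕ) = (j : ℕ) then 1 else 0 := by
  intro n
  induction n with
  | zero =>
    intro i j
    fin_cases i <;> fin_cases j <;> simp [polarG]
  | succ n ih =>
    intro i j
    have h2n : 0 < 2 ^ n := pow_pos two_pos n
    simp only [polarG, Matrix.reindex_apply, Matrix.submatrix_apply, Equiv.symm_trans_apply,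
      finCongr_symm, finCongr_apply, finProdFinEquiv_symm_apply, Matrix.kroneckerMap_apply]
    rw [kernel_apply, ih]
    simp only [Fin.coe_divNat, Fin.coe_modNat, Fin.coe_cast]
    have key : ((j : ℕ) &&& (i : ℕ) = (j : ℕ)) ↔
        (((j : ℕ) / 2 ^ n &&& (i : ℕ) / 2 ^ n = (j : ℕ) / 2 ^ n) ∧
          ((j : ℕ) % 2 ^ n &&& (i : ℕ) % 2 ^ n = (j : ℕ) % 2 ^ n)) := by
      conv_lhs => rw [← Nat.div_add_mod (j : ℕ) (2 ^ n), ← Nat.div_add_mod (i : ℕ) (2 ^ n)]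
      exact land_split_iff (Nat.mod_lt _ h2n) (Nat.mod_lt _ h2n)
    by_cases h : (j : ℕ) &&& (i : ℕ) = (j : ℕ)
    · obtain ⟨h1, h2⟩ := key.mp h
      simp [h, h1, h2]
    · rw [if_neg h]
      split_ifs with h1 h2 <;> simp_all [key]

lemma card_submask : ∀ (n : ℕ) {i : ℕ}, i < 2 ^ n →
    ((Finset.range (2 ^ n)).filter fun k => k &&& i = k).card = 2 ^ wt i := by
  intro n
  induction n with
  | zero =>
    intro i hi
    interval_cases i
    simp only [wt, Nat.digits_zero, List.sum_nil, pow_zero]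
    decide
  | succ n ih =>
    intro i hi
    have h2n : 0 < 2 ^ n := pow_pos two_pos n
    set i1 := i / 2 ^ n with hi1
    set i2 := i % 2 ^ n with hi2
    have hi1lt : i1 < 2 := by
      rw [hi1]
      have : (2:ℕ) ^ (n+1) = 2 ^ n * 2 := by ring
      exact Nat.div_lt_of_lt_mul (by omega)
    have hi2lt : i2 < 2 ^ n := Nat.mod_lt _ h2n
    have hidecomp : i = 2 ^ n * i1 + i2 := (Nat.div_add_mod i (2 ^ n)).symm
    have hcard : ((Finset.range (2 ^ (n+1))).filter fun k => k &&& i = k).card =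
        (((Finset.range 2).filter fun a => a &&& i1 = a) ×ˢ
          ((Finset.range (2 ^ n)).filter fun b => b &&& i2 = b)).card := by
      refine Finset.card_bij' (fun k _ => (k / 2 ^ n, k % 2 ^ n))
        (fun p _ => 2 ^ n * p.1 + p.2) ?hi ?hj ?left ?right
      case hi =>
        intro k hk
        simp only [Finset.mem_filter, Finset.mem_range] at hk
        obtain ⟨hklt, hland⟩ := hk
        have hkdecomp : k = 2 ^ n * (k / 2 ^ n) + k % 2 ^ n := (Nat.div_add_mod k (2 ^ n)).symm
        rw [hidecomp, hkdecomp] at hland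
        rw [land_split_iff hi2lt (Nat.mod_lt _ h2n)] at hland
        simp only [Finset.mem_product, Finset.mem_filter, Finset.mem_range]
        refine ⟨⟨?_, hland.1⟩, Nat.mod_lt _ h2n, hland.2⟩
        have h22 : (2:ℕ) ^ (n+1) = 2 ^ n * 2 := by ring
        exact Nat.div_lt_of_lt_mul (by omega)
      case hj =>
        intro p hp
        simp only [Finset.mem_product, Finset.mem_filter, Finset.mem_range] at hp
        obtain ⟨⟨hp1, hl1⟩, hp2, hl2⟩ := hp
        simp only [Finset.mem_filter, Finset.mem_range]
        constructor
        · have h22 : (2:ℕ) ^ (n+1) = 2 ^ n * 2 := by ring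
          nlinarith
        · rw [hidecomp, land_split_iff hi2lt hp2]
          exact ⟨hl1, hl2⟩
      case left =>
        intro k hk
        exact Nat.div_add_mod k (2 ^ n)
      case right =>
        intro p hp
        simp only [Finset.mem_product, Finset.mem_filter, Finset.mem_range] at hp
        obtain ⟨⟨hp1, _⟩, hp2, _⟩ := hp
        have hd : (2 ^ n * p.1 + p.2) / 2 ^ n = p.1 := by
          rw [Nat.mul_add_div h2n, Nat.div_eq_of_lt hp2, Nat.add_zero]
        have hm : (2 ^ n * p.1 + p.2) % 2 ^ n = p.2 := by
          rw [Nat.mul_add_mod, Nat.mod_eq_of_lt hp2]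
        show ((2 ^ n * p.1 + p.2) / 2 ^ n, (2 ^ n * p.1 + p.2) % 2 ^ n) = p
        rw [hd, hm]
    rw [hcard, Finset.card_product]
    have hc1 : ((Finset.range 2).filter fun a => a &&& i1 = a).card = 2 ^ wt i1 := by
      interval_cases i1 <;> simp [wt] <;> decide
    rw [hc1, ih hi2lt, hidecomp, wt_split i1 i2 hi1lt hi2lt, pow_add]

lemma card_fin_filter {N : ℕ} (p : ℕ → Prop) [DecidablePred p] :
    (Finset.univ.filter fun k : Fin N => p (k : ℕ)).card =
      ((Finset.range N).filter p).card := by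
  refine Finset.card_bij' (fun k _ => (k : ℕ))
    (fun m hm => ⟨m, Finset.mem_range.mp (Finset.mem_filter.mp hm).1⟩) ?_ ?_ ?_ ?_
  · intro k hk
    simp only [Finset.mem_filter, Finset.mem_univ, true_and] at hk
    simp only [Finset.mem_filter, Finset.mem_range]
    exact ⟨k.isLt, hk⟩
  · intro m hm
    simp only [Finset.mem_filter, Finset.mem_univ, true_and]
    exact (Finset.mem_filter.mp hm).2
  · intro k hk; rfl
  · intro m hm; rfl

theorem rowWt_add_polarG (n : ℕ) (i j : Fin (2 ^ n)) :
    (rowWt (polarG n i + polarG n j) : ℤ) =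
      2 ^ wt (i : ℕ) + 2 ^ wt (j : ℕ) - 2 ^ (wt ((i : ℕ) &&& (j : ℕ)) + 1) := by
  classical
  set A := Finset.univ.filter (fun k : Fin (2 ^ n) => (k : ℕ) &&& (i : ℕ) = (k : ℕ)) with hA
  set B := Finset.univ.filter (fun k : Fin (2 ^ n) => (k : ℕ) &&& (j : ℕ) = (k : ℕ)) with hB
  have hAB : A ∩ B = Finset.univ.filter
      (fun k : Fin (2 ^ n) => (k : ℕ) &&& ((i : ℕ) &&& (j : ℕ)) = (k : ℕ)) := by
    rw [hA, hB, ← Finset.filter_and]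
    apply Finset.filter_congr
    intro k _
    exact land_and_iff _ _ _
  have hcardA : A.card = 2 ^ wt (i : ℕ) := by
    rw [hA, card_fin_filter (fun m => m &&& (i : ℕ) = m), card_submask n i.isLt]
  have hcardB : B.card = 2 ^ wt (j : ℕ) := by
    rw [hB, card_fin_filter (fun m => m &&& (j : ℕ) = m), card_submask n j.isLt]
  have hcardAB : (A ∩ B).card = 2 ^ wt ((i : ℕ) &&& (j : ℕ)) := by
    rw [hAB, card_fin_filter (fun m => m &&& ((i : ℕ) &&& (j : ℕ)) = m),
      card_submask n (lt_of_le_of_lt Nat.and_le_left i.isLt)]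
  have hsd : rowWt (polarG n i + polarG n j) = ((A ∪ B) \ (A ∩ B)).card := by
    unfold rowWt
    congr 1
    ext k
    simp only [Finset.mem_filter, Finset.mem_univ, true_and, Finset.mem_sdiff,
      Finset.mem_union, Finset.mem_inter, hA, hB, Pi.add_apply, polarG_apply]
    by_cases h1 : (k : ℕ) &&& (i : ℕ) = (k : ℕ) <;>
      by_cases h2 : (k : ℕ) &&& (j : ℕ) = (k : ℕ) <;>
      simp [h1, h2] <;> decide
  have hsub : (A ∩ B) ⊆ (A ∪ B) := Finset.inter_subset_left.trans Finset.subset_union_left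
  have hle : (A ∩ B).card ≤ (A ∪ B).card := Finset.card_le_card hsub
  have hcup : (A ∪ B).card + (A ∩ B).card = A.card + B.card :=
    Finset.card_union_add_card_inter A B
  rw [hsd, Finset.card_sdiff_of_subset hsub]
  rw [hcardA, hcardB, hcardAB] at hcup
  push_cast [Nat.cast_sub hle]
  rw [pow_succ]
  have h1' := congrArg (Nat.cast : ℕ → ℤ) hcup
  have h2' := congrArg (Nat.cast : ℕ → ℤ) hcardAB
  push_cast at h1' h2'
  linarith
end

section
/- Let i < j < k be integers in Z_{2^n} such that (NOT i) AND j AND k = 0 (bitwise on n-bit expansions). Then mu_i(j,k) := ((NOT i) AND (j OR k)) OR (j AND k) satisfies mu_i(j,k) > k. -/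
/-!
Let `t` be the most significant bit at which `i < j` differ, so `i` has a `0` and `j` a `1`
there. Since `j` and `k` share only bits of `i`, `k` has a `0` at `t`, while `μ` has a `1`.
Above `t` the bits of `i` and `j` agree, and on any such bit `μ` reproduces the bit of `k`;
hence `μ > k`.
-/

namespace Nat

theorem exists_testBit_of_lt {a b : ℕ} (h : a < b) :
    ∃ t, a.testBit t = false ∧ b.testBit t = true ∧ ∀ s, t < s → a.testBit s = b.testBit s := by
  obtain ⟨t, hne, hagree⟩ := exists_most_significant_bit (xor_ne_zero_iff.mpr h.ne)
  simp only [testBit_xor, bne_eq_false_iff_eq] at hne hagree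
  cases ha : a.testBit t <;> cases hb : b.testBit t <;> simp [ha, hb] at hne
  · exact ⟨t, ha, hb, hagree⟩
  · exact absurd h (lt_of_testBit t hb ha fun s hs => (hagree s hs).symm).not_gt

theorem testBit_eq_false_of_lt_two_pow_of_le {a n s : ℕ} (ha : a < 2 ^ n) (hs : n ≤ s) :
    a.testBit s = false :=
  testBit_eq_false_of_lt (ha.trans_le (Nat.pow_le_pow_right two_pos hs))

theorem testBit_two_pow_sub_one_xor {n s : ℕ} (i : ℕ) (hs : s < n) :
    ((2 ^ n - 1) ^^^ i).testBit s = !i.testBit s := by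
  simp [testBit_xor, testBit_two_pow_sub_one, hs]

end Nat

open Nat

theorem mu_gt (n i j k : ℕ) (hk : k < 2 ^ n) (hij : i < j) (hjk : j < k)
    (h : ((2 ^ n - 1) ^^^ i) &&& j &&& k = 0) :
    (((2 ^ n - 1) ^^^ i) &&& (j ||| k)) ||| (j &&& k) > k := by
  obtain ⟨t, hit, hjt, hagree⟩ := exists_testBit_of_lt hij
  have hj : j < 2 ^ n := hjk.trans hk
  have htn : t < n := by
    by_contra! hnt
    simp [testBit_eq_false_of_lt_two_pow_of_le hj hnt] at hjt
  have hkt : k.testBit t = false := by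
    simpa [testBit_two_pow_sub_one_xor i htn, hit, hjt] using congrArg (testBit · t) h
  refine lt_of_testBit t hkt (by simp [testBit_two_pow_sub_one_xor i htn, hit, hjt]) ?_
  intro s hts
  rcases lt_or_ge s n with hsn | hns
  · simp only [testBit_or, testBit_and, testBit_two_pow_sub_one_xor i hsn, hagree s hts]
    cases j.testBit s <;> cases k.testBit s <;> rfl
  · simp [testBit_eq_false_of_lt_two_pow_of_le hj hns, testBit_eq_false_of_lt_two_pow_of_le hk hns]
end

section
/- Let B be a finite set of binary vectors of length N all agreeing in their first coordinate, and define L* = { min{ l in {1,...,N-1} : b_l ≠ b'_l } : b, b' in B, b ≠ b' }. Then |B| <= 2^{|L*|}. -/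
open Classical in
/-- If all vectors of `B ⊆ F₂^N` agree in coordinate `0`, and `L*` is the set of
first-disagreement positions over pairs of distinct elements of `B`, then
`|B| ≤ 2^{|L*|}`. -/
theorem card_le_two_pow_firstDiff (N : ℕ) (hN : 0 < N)
    (B : Finset (Fin N → ZMod 2))
    (h0 : ∀ b ∈ B, ∀ b' ∈ B, b ⟨0, hN⟩ = b' ⟨0, hN⟩) :
    B.card ≤ 2 ^ (Set.ncard {l : Fin N | ∃ b ∈ B, ∃ b' ∈ B, b ≠ b' ∧
      b l ≠ b' l ∧ ∀ m : Fin N, m < l → b m = b' m}) := by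
  set S : Set (Fin N) := {l : Fin N | ∃ b ∈ B, ∃ b' ∈ B, b ≠ b' ∧
      b l ≠ b' l ∧ ∀ m : Fin N, m < l → b m = b' m} with hS
  have hinj : Set.InjOn (fun b : Fin N → ZMod 2 => fun l : S => b l.1) ↑B := by
    intro b hb b' hb' heq
    by_contra hne
    -- set of disagreement indices
    have hne' : (Finset.univ.filter (fun l : Fin N => b l ≠ b' l)).Nonempty := by
      by_contra h
      apply hne
      funext l
      by_contra hl
      exact h ⟨l, Finset.mem_filter.2 ⟨Finset.mem_univ _, hl⟩⟩
    set T := Finset.univ.filter (fun l : Fin N => b l ≠ b' l)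
    have hlmem := T.min'_mem hne'
    set l := T.min' hne'
    have hlS : l ∈ S := by
      refine ⟨b, hb, b', hb', hne, (Finset.mem_filter.1 hlmem).2, ?_⟩
      intro m hm
      by_contra hml
      exact absurd (T.min'_le m (Finset.mem_filter.2 ⟨Finset.mem_univ _, hml⟩))
        (not_le.2 hm)
    have := congrFun heq ⟨l, hlS⟩
    exact (Finset.mem_filter.1 hlmem).2 this
  have hcard : B.card ≤ Fintype.card (S → ZMod 2) := by
    classical
    calc B.card ≤ (Finset.univ : Finset (S → ZMod 2)).card :=
          Finset.card_le_card_of_injOn _ (fun _ _ => Finset.mem_univ _) hinj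
      _ = Fintype.card (S → ZMod 2) := rfl
  have h2 : Fintype.card (S → ZMod 2) = 2 ^ S.ncard := by
    rw [Fintype.card_fun, ZMod.card]
    congr 1
    rw [Set.ncard_eq_toFinset_card']
    simp [Set.toFinset_card]
  omega
end

section
/- Let i < min{j, k} be integers in Z_{2^n}, and define mu_i(j,k) = ((NOT i) AND (j OR k)) OR (j AND k). Then l*_i(mu_i(j,k)) = l*_i(max{j,k}), where l*_i(h) = max{ l : i_(l)=0 and h_(l)=1 } for h > i. -/
/-- `IsLstar a b l` says that `l` is the most significant bit position where
`b` has a `1` and `a` has a `0`, i.e. `l = l*_a(b)`. -/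
def IsLstar (a b l : ℕ) : Prop :=
  a.testBit l = false ∧ b.testBit l = true ∧
    ∀ m, l < m → ¬(a.testBit m = false ∧ b.testBit m = true)

/-!
Let `L` be the top bit where `i` and `h = max j k` differ. Since `i ≤ j, k ≤ h`, all of `i, j, k`
agree above `L`. Bitwise, `μ` is `j OR k` where `i` has a `0` and `j AND k` where `i` has a `1`,
so above `L` it agrees with `i` as well, while at `L` it has a `1` because `j` or `k` does.
Hence `L` is also the top bit where `i` and `μ` differ, and `l*_i` picks exactly that bit.
-/

/-- The paper's `μ_i(j, k)`; `(2 ^ n - 1) ^^^ i` is `NOT i` in `ℤ/2ⁿ`. -/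
def mu (n i j k : ℕ) : ℕ := (((2 ^ n - 1) ^^^ i) &&& (j ||| k)) ||| (j &&& k)

namespace Nat

lemma exists_top_testBit_of_lt {a b : ℕ} (h : a < b) :
    ∃ L, a.testBit L = false ∧ b.testBit L = true ∧
      ∀ m, L < m → a.testBit m = b.testBit m := by
  obtain ⟨L, hL, habove⟩ := exists_most_significant_bit (xor_ne_zero_iff.2 h.ne)
  have hagree : ∀ m, L < m → a.testBit m = b.testBit m := fun m hm => by
    simpa [testBit_xor] using habove m hm
  rw [testBit_xor] at hL
  cases ha : a.testBit L <;> cases hb : b.testBit L <;>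
    simp only [ha, hb, bne_self_eq_false, Bool.bne_true, Bool.bne_false, Bool.not_false,
      Bool.false_eq_true] at hL
  · exact ⟨L, ha, hb, hagree⟩
  · exact absurd (lt_of_testBit L hb ha fun m hm => (hagree m hm).symm) h.not_gt

lemma testBit_eq_of_le_of_le {a b c L : ℕ} (hab : a ≤ b) (hbc : b ≤ c)
    (hac : ∀ m, L < m → a.testBit m = c.testBit m) (m : ℕ) (hm : L < m) :
    a.testBit m = b.testBit m := by
  have hac' : a / 2 ^ (L + 1) = c / 2 ^ (L + 1) := eq_of_testBit_eq fun d => by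
    simp only [testBit_div_two_pow]
    exact hac _ (by omega)
  have hab' : a / 2 ^ (L + 1) = b / 2 ^ (L + 1) :=
    le_antisymm (Nat.div_le_div_right hab) (hac' ▸ Nat.div_le_div_right hbc)
  obtain ⟨d, rfl⟩ := exists_add_of_le (succ_le_of_lt hm)
  simpa only [testBit_div_two_pow, Nat.add_comm] using congrArg (testBit · d) hab'

end Nat

lemma isLstar_of_testBit {a b L : ℕ} (ha : a.testBit L = false) (hb : b.testBit L = true)
    (hagree : ∀ m, L < m → a.testBit m = b.testBit m) : IsLstar a b L :=
  ⟨ha, hb, fun m hm ⟨ham, hbm⟩ => by simp [hagree m hm, hbm] at ham⟩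

lemma IsLstar.unique {a b l l' : ℕ} (h : IsLstar a b l) (h' : IsLstar a b l') : l = l' := by
  rcases lt_trichotomy l l' with hlt | heq | hgt
  · exact absurd ⟨h'.1, h'.2.1⟩ (h.2.2 _ hlt)
  · exact heq
  · exact absurd ⟨h.1, h.2.1⟩ (h'.2.2 _ hgt)

lemma IsLstar.iff_eq {a b L : ℕ} (h : IsLstar a b L) {l : ℕ} : IsLstar a b l ↔ l = L :=
  ⟨fun h' => h'.unique h, fun hl => hl ▸ h⟩

lemma testBit_mu {n i j k : ℕ} (hj : j < 2 ^ n) (hk : k < 2 ^ n) (m : ℕ) :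
    (mu n i j k).testBit m =
      if i.testBit m then j.testBit m && k.testBit m else j.testBit m || k.testBit m := by
  by_cases hm : m < n
  · simp only [mu, Nat.testBit_or, Nat.testBit_and, Nat.testBit_xor, Nat.testBit_two_pow_sub_one,
      hm, decide_true]
    cases i.testBit m <;> cases j.testBit m <;> cases k.testBit m <;> rfl
  · have hpow : 2 ^ n ≤ 2 ^ m := Nat.pow_le_pow_right two_pos (not_lt.1 hm)
    simp [mu, Nat.testBit_lt_two_pow (hj.trans_le hpow), Nat.testBit_lt_two_pow (hk.trans_le hpow)]

theorem lstar_mu (n i j k : ℕ) (hj : j < 2 ^ n) (hk : k < 2 ^ n)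
    (hij : i < j) (hik : i < k) :
    (((2 ^ n - 1) ^^^ i) &&& (j ||| k)) ||| (j &&& k) > i ∧
    ∀ l, IsLstar i ((((2 ^ n - 1) ^^^ i) &&& (j ||| k)) ||| (j &&& k)) l ↔
      IsLstar i (max j k) l := by
  change mu n i j k > i ∧ ∀ l, IsLstar i (mu n i j k) l ↔ IsLstar i (max j k) l
  obtain ⟨L, hiL, hmaxL, hagree⟩ := Nat.exists_top_testBit_of_lt (lt_max_of_lt_left hij)
  have hj_agree := Nat.testBit_eq_of_le_of_le hij.le (le_max_left j k) hagree
  have hk_agree := Nat.testBit_eq_of_le_of_le hik.le (le_max_right j k) hagree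
  have hmu_agree : ∀ m, L < m → i.testBit m = (mu n i j k).testBit m := fun m hm => by
    rw [testBit_mu hj hk, ← hj_agree m hm, ← hk_agree m hm]
    cases i.testBit m <;> rfl
  have hmuL : (mu n i j k).testBit L = true := by
    rw [testBit_mu hj hk, hiL]
    rcases max_choice j k with h | h <;> rw [h] at hmaxL <;> simp [hmaxL]
  refine ⟨Nat.lt_of_testBit L hiL hmuL hmu_agree, fun l => ?_⟩
  rw [(isLstar_of_testBit hiL hmuL hmu_agree).iff_eq, (isLstar_of_testBit hiL hmaxL hagree).iff_eq]
end

section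
/- Let n >= 2, r = n - 2, N = 2^n, and consider coset indices i in Z_N whose binary support S_i = {x, y} with 0 <= x < y < n (i.e., w(i) = 2). For a decreasing rate-profile I (in particular the RM(n-2, n) profile I = {i : w(i) >= 2}), the cardinality |I ∩ K_i| equals (n - 2) + (n - 2 - x) + (n - 1 - y), where K_i = { j > i : w((NOT i) AND j) = 1 }. -/
open Finset Colex

theorem wt_eq_length_bitIndices (j : ℕ) : wt j = j.bitIndices.length := by
  induction j using Nat.binaryRec with
  | zero => simp [wt]
  | bit b j ih =>
    rcases eq_or_ne j 0 with rfl | hj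
    · cases b <;> simp [wt]
    · unfold wt at ih ⊢
      rw [Nat.digits_def' one_lt_two (Nat.pos_of_ne_zero (Nat.bit_ne_zero b hj)), Nat.bit_mod_two,
        Nat.bit_div_two]
      cases b
      · simp [ih]
      · rw [Nat.bitIndices_bit_true]
        simp [ih, add_comm]

theorem wt_eq_card_toFinset_bitIndices (j : ℕ) : wt j = #j.bitIndices.toFinset := by
  rw [wt_eq_length_bitIndices, List.toFinset_card_of_nodup Nat.bitIndices_nodup]

theorem lt_two_pow_iff_toFinset_bitIndices_subset {j n : ℕ} :
    j < 2 ^ n ↔ j.bitIndices.toFinset ⊆ range n := by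
  simp only [subset_iff, List.mem_toFinset, Nat.mem_bitIndices, mem_range]
  refine ⟨fun hj l hl => ?_, fun h => Nat.lt_pow_two_of_testBit j fun l hl => ?_⟩
  · by_contra! hnl
    simp [Nat.testBit_lt_two_pow (hj.trans_le (Nat.pow_le_pow_right two_pos hnl))] at hl
  · exact Bool.eq_false_iff.2 fun hl' => absurd (h hl') (not_lt.2 hl)

theorem toFinset_bitIndices_xor_land {i j n : ℕ} (hj : j < 2 ^ n) :
    (((2 ^ n - 1) ^^^ i) &&& j).bitIndices.toFinset =
      j.bitIndices.toFinset \ i.bitIndices.toFinset := by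
  ext l
  simp only [List.mem_toFinset, Nat.mem_bitIndices, Nat.testBit_land, Nat.testBit_xor,
    Nat.testBit_two_pow_sub_one, mem_sdiff]
  by_cases hl : l < n
  · simp [hl, and_comm]
  · simp [hl, Nat.testBit_lt_two_pow (hj.trans_le (Nat.pow_le_pow_right two_pos (not_lt.1 hl)))]

theorem lt_iff_toColex_toFinset_bitIndices_lt {i j : ℕ} :
    i < j ↔ toColex i.bitIndices.toFinset < toColex j.bitIndices.toFinset := by
  rw [← geomSum_lt_geomSum_iff_toColex_lt_toColex le_rfl, sum_toFinset_bitIndices_two_pow,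
    sum_toFinset_bitIndices_two_pow]

theorem card_filter_range_two_pow_eq {n : ℕ} {P : ℕ → Prop} [DecidablePred P]
    {Q : Finset ℕ → Prop} [DecidablePred Q] (h : ∀ j < 2 ^ n, P j ↔ Q j.bitIndices.toFinset) :
    #((range (2 ^ n)).filter P) = #((range n).powerset.filter Q) := by
  refine card_nbij' (fun j => j.bitIndices.toFinset) (fun s => ∑ i ∈ s, 2 ^ i) ?_ ?_ ?_ ?_
  · intro j hj
    simp only [mem_coe, mem_filter, mem_range] at hj
    simpa [← lt_two_pow_iff_toFinset_bitIndices_subset, ← h j hj.1] using hj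
  · intro s hs
    simp only [mem_coe, mem_filter, mem_powerset] at hs
    have hlt : ∑ i ∈ s, 2 ^ i < 2 ^ n := by
      rw [lt_two_pow_iff_toFinset_bitIndices_subset, toFinset_bitIndices_sum_two_pow]
      exact hs.1
    simpa [hlt, h _ hlt] using hs.2
  · intro j _
    exact sum_toFinset_bitIndices_two_pow j
  · intro s _
    exact toFinset_bitIndices_sum_two_pow s

section
variable {α : Type*} [DecidableEq α] {S s : Finset α} {l m : α}

theorem eq_insert_sdiff_sdiff_of_sdiff_eq_singleton (h : s \ S = {m}) :
    s = insert m (S \ (S \ s)) := by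
  rw [sdiff_sdiff_right_self, insert_eq, ← h, inf_eq_inter, inter_comm, sdiff_union_inter]

theorem insert_erase_sdiff_self_of_notMem (hm : m ∉ S) : insert m (S.erase l) \ S = {m} := by
  grind

theorem sdiff_insert_erase_of_notMem (hm : m ∉ S) (hl : l ∈ S) :
    S \ insert m (S.erase l) = {l} := by
  grind

theorem card_insert_erase_of_notMem (hm : m ∉ S) (hl : l ∈ S) : #(insert m (S.erase l)) = #S := by
  rw [card_insert_of_notMem (fun h => hm (mem_of_mem_erase h)), card_erase_add_one hl]

end

section
variable {α : Type*} [LinearOrder α] {S s U : Finset α} {m : α}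

theorem toColex_lt_toColex_iff_of_sdiff_eq_singleton (h : s \ S = {m}) :
    toColex S < toColex s ↔ ∀ l ∈ S \ s, l < m := by
  have hm : ∀ a, a ∈ s ∧ a ∉ S ↔ a = m := fun a => by rw [← mem_sdiff, h, mem_singleton]
  rw [toColex_lt_toColex_iff_exists_forall_lt]
  constructor
  · rintro ⟨a, has, haS, hlt⟩ l hl
    rw [mem_sdiff] at hl
    exact (hm a).1 ⟨has, haS⟩ ▸ hlt l hl.1 hl.2
  · intro hlt
    obtain ⟨hms, hmS⟩ := (hm m).2 rfl
    exact ⟨m, hms, hmS, fun l hlS hls => hlt l (mem_sdiff.2 ⟨hlS, hls⟩)⟩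

theorem filter_card_sdiff_eq_one_eq_union (hSU : S ⊆ U) :
    U.powerset.filter (fun s => #S ≤ #s ∧ toColex S < toColex s ∧ #(s \ S) = 1) =
      (U \ S).image (insert · S) ∪
        (S.sigma fun l => (U \ S).filter (l < ·)).image (fun p => insert p.2 (S.erase p.1)) := by
  ext s
  simp only [mem_filter, mem_powerset, mem_union, mem_image, mem_sigma, Sigma.exists, mem_sdiff]
  constructor
  · rintro ⟨hsU, hcard, hlt, hone⟩
    obtain ⟨m, hm⟩ := card_eq_one.1 hone
    obtain ⟨hms, hmS⟩ := mem_sdiff.1 (hm ▸ mem_singleton_self m)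
    rw [toColex_lt_toColex_iff_of_sdiff_eq_singleton hm] at hlt
    have hs := eq_insert_sdiff_sdiff_of_sdiff_eq_singleton hm
    have hremoved : #(S \ s) ≤ 1 := by
      have := card_sdiff_add_card_inter s S
      have := card_sdiff_add_card_inter S s
      rw [inter_comm] at this
      omega
    rcases Nat.le_one_iff_eq_zero_or_eq_one.1 hremoved with h | h
    · rw [card_eq_zero.1 h, sdiff_empty] at hs
      exact Or.inl ⟨m, ⟨hsU hms, hmS⟩, hs.symm⟩
    · obtain ⟨l, hl⟩ := card_eq_one.1 h
      rw [hl, sdiff_singleton_eq_erase] at hs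
      have hlS : l ∈ S \ s := hl ▸ mem_singleton_self l
      exact Or.inr ⟨l, m, ⟨(mem_sdiff.1 hlS).1, ⟨hsU hms, hmS⟩, hlt l hlS⟩, hs.symm⟩
  · rintro (⟨m, ⟨hmU, hmS⟩, rfl⟩ | ⟨l, m, ⟨hlS, ⟨hmU, hmS⟩, hlm⟩, rfl⟩)
    · refine ⟨insert_subset hmU hSU, card_le_card (subset_insert m S), ?_, ?_⟩
      · exact toColex_lt_toColex_of_ssubset (ssubset_insert hmS)
      · rw [insert_sdiff_cancel hmS, card_singleton]
    · refine ⟨insert_subset hmU ((erase_subset l S).trans hSU),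
        (card_insert_erase_of_notMem hmS hlS).ge, ?_, ?_⟩
      · rw [toColex_lt_toColex_iff_of_sdiff_eq_singleton (insert_erase_sdiff_self_of_notMem hmS),
          sdiff_insert_erase_of_notMem hmS hlS]
        simpa using hlm
      · rw [insert_erase_sdiff_self_of_notMem hmS, card_singleton]

theorem card_filter_card_sdiff_eq_one (hSU : S ⊆ U) :
    #(U.powerset.filter (fun s => #S ≤ #s ∧ toColex S < toColex s ∧ #(s \ S) = 1)) =
      #(U \ S) + ∑ l ∈ S, #((U \ S).filter (l < ·)) := by
  rw [filter_card_sdiff_eq_one_eq_union hSU, card_union_of_disjoint, card_image_of_injOn,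
    card_image_of_injOn, card_sigma]
  · rintro ⟨l, m⟩ h ⟨l', m'⟩ h' heq
    simp only [coe_sigma, Set.mem_sigma_iff, mem_coe, mem_filter, mem_sdiff] at h h' heq
    have hm := congrArg (· \ S) heq
    have hl := congrArg (S \ ·) heq
    simp only [insert_erase_sdiff_self_of_notMem h.2.1.2,
      insert_erase_sdiff_self_of_notMem h'.2.1.2, sdiff_insert_erase_of_notMem h.2.1.2 h.1,
      sdiff_insert_erase_of_notMem h'.2.1.2 h'.1, singleton_inj] at hm hl
    rw [hm, hl]
  · intro m hm m' _ heq
    exact (insert_inj (mem_sdiff.1 hm).2).1 heq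
  · simp only [disjoint_left, mem_image, mem_sigma, mem_filter, mem_sdiff]
    rintro _ ⟨m, ⟨-, hmS⟩, rfl⟩ ⟨⟨l, m'⟩, ⟨hlS, ⟨-, hm'S⟩, -⟩, heq⟩
    have := congrArg card heq
    rw [card_insert_erase_of_notMem hm'S hlS, card_insert_of_notMem hmS] at this
    omega

end

theorem pair_subset_range {n x y : ℕ} (hxy : x < y) (hyn : y < n) :
    ({x, y} : Finset ℕ) ⊆ range n := by
  simp only [insert_subset_iff, mem_range, singleton_subset_iff]
  omega

theorem card_range_sdiff_pair {n x y : ℕ} (hxy : x < y) (hyn : y < n) :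
    #(range n \ {x, y}) = n - 2 := by
  rw [card_sdiff_of_subset (pair_subset_range hxy hyn), card_pair hxy.ne, card_range]

theorem card_filter_range_sdiff_pair_lt_left {n x y : ℕ} (hxy : x < y) (hyn : y < n) :
    #((range n \ {x, y}).filter (x < ·)) = n - 2 - x := by
  have : (range n \ {x, y}).filter (x < ·) = (Ioo x n).erase y := by
    ext m
    simp only [mem_filter, mem_sdiff, mem_range, mem_insert, mem_singleton, mem_erase, mem_Ioo]
    omega
  rw [this, card_erase_of_mem (mem_Ioo.2 ⟨hxy, hyn⟩), Nat.card_Ioo]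
  omega

theorem card_filter_range_sdiff_pair_lt_right {n x y : ℕ} (hxy : x < y) :
    #((range n \ {x, y}).filter (y < ·)) = n - 1 - y := by
  have : (range n \ {x, y}).filter (y < ·) = Ioo y n := by
    ext m
    simp only [mem_filter, mem_sdiff, mem_range, mem_insert, mem_singleton, mem_Ioo]
    omega
  rw [this, Nat.card_Ioo]
  omega

theorem card_I_inter_K_general (n : ℕ) (i x y : ℕ) (hxy : x < y) (hyn : y < n)
    (hsupp : ∀ l, i.testBit l = true ↔ l = x ∨ l = y) :
    (((Finset.range (2 ^ n)).filter fun j => 2 ≤ wt j) ∩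
      ((Finset.range (2 ^ n)).filter fun j =>
        i < j ∧ wt (((2 ^ n - 1) ^^^ i) &&& j) = 1)).card =
      (n - 2) + (n - 2 - x) + (n - 1 - y) := by
  have hS : i.bitIndices.toFinset = {x, y} := by
    ext l
    simp [hsupp]
  rw [← filter_and, card_filter_range_two_pow_eq (Q := fun s =>
      #{x, y} ≤ #s ∧ toColex {x, y} < toColex s ∧ #(s \ {x, y}) = 1),
    card_filter_card_sdiff_eq_one (pair_subset_range hxy hyn), sum_pair hxy.ne, card_range_sdiff_pair hxy hyn,
    card_filter_range_sdiff_pair_lt_left hxy hyn, card_filter_range_sdiff_pair_lt_right hxy,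
    add_assoc]
  intro j hj
  rw [wt_eq_card_toFinset_bitIndices, wt_eq_card_toFinset_bitIndices, toFinset_bitIndices_xor_land hj,
    lt_iff_toColex_toFinset_bitIndices_lt, hS, card_pair hxy.ne]

/-- For `i` with binary support `{x, y}`, `x < y < n`, the number of indices
`j ∈ I ∩ K_i`, where `I = {j < 2^n : wt j ≥ 2}` is the RM(n-2, n) profile and
`K_i = {j > i : wt((NOT i) AND j) = 1}`, equals `(n-2) + (n-2-x) + (n-1-y)`. -/
theorem card_I_inter_K (n : ℕ) (hn : 2 ≤ n) (i x y : ℕ) (hxy : x < y) (hyn : y < n)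
    (hi : i < 2 ^ n) (hsupp : ∀ l, i.testBit l = true ↔ l = x ∨ l = y) :
    (((Finset.range (2 ^ n)).filter fun j => 2 ≤ wt j) ∩
      ((Finset.range (2 ^ n)).filter fun j =>
        i < j ∧ wt (((2 ^ n - 1) ^^^ i) &&& j) = 1)).card =
      (n - 2) + (n - 2 - x) + (n - 1 - y) :=
  card_I_inter_K_general n i x y hxy hyn hsupp
end
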